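/- Let $n \ge 1$ and let $f: \mathbb{Z}_2^n \to \{0,1\}$ be a Boolean function whose Fourier transform $\hat f$ satisfies $|\mathrm{supp}(\hat f)| < 2^{n-1}$. Then the continuous-time quantum walk on the bunkbed graph $\mathcal{B}_n(A_f)$ starting at vertex $(0, 0_n)$ is not instantaneous uniform mixing at any time: for every $t \in \mathbb{R}$ there exists a vertex $v \in \mathbb{Z}_2 \times \mathbb{Z}_2^n$ with $|\psi_t(v)|^2 \neq 2^{-(n+1)}$. -/

import Mathlib

open Matrix Complex Finset Kronecker

/-- Hamming weight of a vector in `(ZMod 2)^n`. -/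
def wt {n : ℕ} (x : Fin n → ZMod 2) : ℕ := (Finset.univ.filter fun i => x i = 1).card

/-- Inner product modulo 2. -/
def dot {n : ℕ} (a x : Fin n → ZMod 2) : ZMod 2 := ∑ i, a i * x i

/-- Adjacency matrix of the hypercube `Q_n`: `A[x,y] = 1` iff `|x ⊕ y| = 1`. -/
def adjQ (n : ℕ) : Matrix (Fin n → ZMod 2) (Fin n → ZMod 2) ℂ :=
  Matrix.of fun x y => if wt (x + y) = 1 then 1 else 0

/-- Continuous-time quantum walk `ψ_t = exp(-itA) ψ₀`. -/
noncomputable def walk {V : Type*} [Fintype V] [DecidableEq V]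
    (A : Matrix V V ℂ) (ψ0 : V → ℂ) (t : ℝ) : V → ℂ :=
  (NormedSpace.exp ((-(t : ℂ) * Complex.I) • A)).mulVec ψ0

/-- Fourier transform over `(ZMod 2)^n`. -/
noncomputable def fhat {n : ℕ} (f : (Fin n → ZMod 2) → ℝ) (a : Fin n → ZMod 2) : ℝ :=
  ∑ x, f x * (-1 : ℝ) ^ (dot a x).val

/-- The `(ZMod 2)^n`-circulant matrix defined by `f`: `A_f[x,y] = f(x ⊕ y)`. -/
def circ {n : ℕ} (f : (Fin n → ZMod 2) → ℝ) :
    Matrix (Fin n → ZMod 2) (Fin n → ZMod 2) ℂ :=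
  Matrix.of fun x y => ((f (x + y) : ℝ) : ℂ)

/-- The Pauli matrix `X` (0 on the diagonal, 1 off the diagonal). -/
def Xmat : Matrix (ZMod 2) (ZMod 2) ℂ := Matrix.of fun i j => if i ≠ j then 1 else 0

/-- Adjacency matrix of the bunkbed graph `𝓑_n(A_f) = I ⊗ Q_n + X ⊗ A_f`. -/
noncomputable def bunkbed {n : ℕ} (f : (Fin n → ZMod 2) → ℝ) :
    Matrix (ZMod 2 × (Fin n → ZMod 2)) (ZMod 2 × (Fin n → ZMod 2)) ℂ :=
  (1 : Matrix (ZMod 2) (ZMod 2) ℂ) ⊗ₖ (adjQ n) + Xmat ⊗ₖ (circ f)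

/-!
The vectors `e_r ⊗ χ_a` (`e_r s = (-1)^(r s)` on the two layers, `χ_a` the Walsh characters of
`ℤ₂ⁿ`) form an eigenbasis of the bunkbed matrix, with eigenvalues `q̂(a) ± f̂(a)`, where `q` is the
indicator of the weight-one vectors. Expanding `δ_(0,0)` in this basis, the amplitude on the upper
layer is `ψ_t(1, x) = 2^-(n+1) ∑_a d_a χ_a(x)` with `d_a = e^(-it(q̂(a)+f̂(a))) - e^(-it(q̂(a)-f̂(a)))`.
By Parseval the upper layer carries mass `2^-(n+2) ∑_a |d_a|²`; since `|d_a| ≤ 2` and `d_a = 0`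
outside the support of `f̂`, this is at most `|supp f̂| / 2^n < 1/2`. Uniform mixing would put
mass exactly `2^n · 2^-(n+1) = 1/2` there.
-/

open ComplexConjugate

namespace Matrix

variable {m : Type*} [Fintype m] [DecidableEq m]

attribute [local instance] Matrix.linftyOpNormedAddCommGroup Matrix.linftyOpNormedRing
  Matrix.linftyOpNormedAlgebra

theorem exp_mulVec_of_mulVec_eq_smul {M : Matrix m m ℂ} {u : m → ℂ} {μ : ℂ}
    (h : M *ᵥ u = μ • u) : NormedSpace.exp M *ᵥ u = NormedSpace.exp μ • u := by
  have hpow (k : ℕ) : (M ^ k) *ᵥ u = μ ^ k • u := by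
    induction k with
    | zero => simp
    | succ k ih => rw [pow_succ', ← mulVec_mulVec, ih, mulVec_smul, h, smul_smul, ← pow_succ]
  let evalAt : Matrix m m ℂ →L[ℂ] m → ℂ :=
    ((LinearMap.applyₗ u).comp (toLin' (R := ℂ)).toLinearMap).toContinuousLinearMap
  have hM := (NormedSpace.exp_series_hasSum_exp' (𝕂 := ℂ) M).mapL evalAt
  have hμ := (NormedSpace.exp_series_hasSum_exp' (𝕂 := ℂ) μ).smul_const u
  refine hM.unique (hμ.congr_fun fun k => ?_)
  change ((k.factorial⁻¹ : ℂ) • M ^ k) *ᵥ u = _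
  rw [smul_mulVec, hpow, smul_smul, smul_eq_mul]

theorem exp_mulVec_sum_smul {κ : Type*} [Fintype κ] {M : Matrix m m ℂ} {u : κ → m → ℂ}
    {μ : κ → ℂ} (h : ∀ i, M *ᵥ u i = μ i • u i) (c : κ → ℂ) :
    NormedSpace.exp M *ᵥ ∑ i, c i • u i = ∑ i, (c i * NormedSpace.exp (μ i)) • u i := by
  simp only [mulVec_sum, mulVec_smul, exp_mulVec_of_mulVec_eq_smul (h _), smul_smul]

theorem kronecker_mulVec_mul {R l n : Type*} [CommSemiring R] [Fintype l] [Fintype n]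
    (A : Matrix l l R) (B : Matrix n n R) (u : l → R) (v : n → R) :
    (A ⊗ₖ B) *ᵥ (fun p => u p.1 * v p.2) = fun p => (A *ᵥ u) p.1 * (B *ᵥ v) p.2 := by
  funext p
  simp only [mulVec, dotProduct, kroneckerMap_apply, Fintype.sum_prod_type, Finset.sum_mul_sum]
  exact Finset.sum_congr rfl fun _ _ => Finset.sum_congr rfl fun _ _ => by ring

theorem circulant_mulVec_addChar {G : Type*} [AddCommGroup G] [Fintype G] (g : G → ℂ)
    (ψ : AddChar G ℂ) : circulant g *ᵥ ψ = (∑ z, g z * ψ (-z)) • ψ := by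
  funext x
  rw [Pi.smul_apply, smul_eq_mul, mulVec, dotProduct, Finset.sum_mul,
    ← Fintype.sum_equiv (Equiv.subLeft x) _ _ fun z => rfl]
  refine Finset.sum_congr rfl fun z _ => ?_
  rw [circulant_apply, Equiv.subLeft_apply, sub_sub_cancel, sub_eq_add_neg,
    AddChar.map_add_eq_mul]
  ring

end Matrix

theorem pi_neg_eq_self_mod_two {ι : Type*} (x : ι → ZMod 2) : -x = x :=
  funext fun i => ZMod.neg_eq_self_mod_two (x i)

theorem sum_norm_sq_sum_mul_of_orthogonal {κ X : Type*} [Fintype κ] [Fintype X] [DecidableEq κ]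
    {u : κ → X → ℂ} {N : ℝ}
    (hu : ∀ a b, ∑ x, u a x * conj (u b x) = if a = b then (N : ℂ) else 0) (d : κ → ℂ) :
    ∑ x, ‖∑ a, d a * u a x‖ ^ 2 = N * ∑ a, ‖d a‖ ^ 2 := by
  apply Complex.ofReal_injective
  push_cast
  calc ∑ x, (‖∑ a, d a * u a x‖ : ℂ) ^ 2
      = ∑ x, (∑ a, d a * u a x) * conj (∑ b, d b * u b x) := by simp only [Complex.mul_conj']
    _ = ∑ x, ∑ a, ∑ b, d a * conj (d b) * (u a x * conj (u b x)) := by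
      simp only [map_sum, map_mul, Fintype.sum_mul_sum]
      exact Finset.sum_congr rfl fun x _ => Finset.sum_congr rfl fun a _ =>
        Finset.sum_congr rfl fun b _ => by ring
    _ = ∑ a, ∑ b, d a * conj (d b) * ∑ x, u a x * conj (u b x) := by
      simp only [Finset.mul_sum]
      rw [Finset.sum_comm]
      exact Finset.sum_congr rfl fun a _ => Finset.sum_comm
    _ = N * ∑ a, (‖d a‖ : ℂ) ^ 2 := by
      simp [hu, Finset.mul_sum, Complex.mul_conj', mul_comm]

theorem ZMod.sum_univ_two {M : Type*} [AddCommMonoid M] (F : ZMod 2 → M) :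
    ∑ u, F u = F 0 + F 1 :=
  Fin.sum_univ_two F

theorem ZMod.eq_zero_or_eq_one_of_two (u : ZMod 2) : u = 0 ∨ u = 1 := by
  revert u; decide

def signChar : AddChar (ZMod 2) ℂ where
  toFun u := (-1) ^ u.val
  map_zero_eq_one' := by simp
  map_add_eq_mul' u v := by rw [← pow_add, ZMod.val_add, ← neg_one_pow_eq_pow_mod_two]

theorem signChar_apply (u : ZMod 2) : signChar u = ((-1 : ℝ) ^ u.val : ℝ) := by
  push_cast; rfl

@[simp]
theorem signChar_one : signChar 1 = -1 := by
  simp [signChar_apply, ZMod.val_one]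

@[simp]
theorem conj_signChar (u : ZMod 2) : conj (signChar u) = signChar u := by
  rw [signChar_apply, Complex.conj_ofReal]

theorem sum_signChar_mul_left (s : ZMod 2) :
    ∑ r, signChar (r * s) = if s = 0 then 2 else 0 := by
  rw [ZMod.sum_univ_two]
  obtain rfl | rfl := ZMod.eq_zero_or_eq_one_of_two s <;> norm_num

section Walsh

variable {ι : Type*} [Fintype ι]

def walsh (a : ι → ZMod 2) : AddChar (ι → ZMod 2) ℂ where
  toFun x := signChar (a ⬝ᵥ x)
  map_zero_eq_one' := by simp
  map_add_eq_mul' x y := by rw [dotProduct_add, AddChar.map_add_eq_mul]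

theorem walsh_apply (a x : ι → ZMod 2) : walsh a x = signChar (a ⬝ᵥ x) := rfl

theorem walsh_comm (a x : ι → ZMod 2) : walsh a x = walsh x a := by
  rw [walsh_apply, walsh_apply, dotProduct_comm]

theorem walsh_add_left (a b x : ι → ZMod 2) : walsh (a + b) x = walsh a x * walsh b x := by
  rw [walsh_apply, add_dotProduct, AddChar.map_add_eq_mul]; rfl

@[simp]
theorem conj_walsh (a x : ι → ZMod 2) : conj (walsh a x) = walsh a x := conj_signChar _

variable [DecidableEq ι]

theorem walsh_eq_zero_iff {a : ι → ZMod 2} : walsh a = 0 ↔ a = 0 := by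
  refine ⟨fun h => ?_, fun h => ?_⟩
  · by_contra ha
    obtain ⟨i, hi⟩ := Function.ne_iff.mp ha
    have hai : a i = 1 := (by decide : ∀ u : ZMod 2, u ≠ 0 → u = 1) _ hi
    have := DFunLike.congr_fun h (Pi.single i 1)
    norm_num [walsh_apply, dotProduct_single, hai] at this
  · ext x
    simp [h, walsh_apply]

theorem sum_walsh_apply (a : ι → ZMod 2) :
    ∑ x, walsh a x = if a = 0 then (2 : ℂ) ^ Fintype.card ι else 0 := by
  simp [AddChar.sum_eq_ite, walsh_eq_zero_iff]

theorem sum_walsh_apply_left (x : ι → ZMod 2) :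
    ∑ a, walsh a x = if x = 0 then (2 : ℂ) ^ Fintype.card ι else 0 := by
  simp only [walsh_comm _ x, sum_walsh_apply]

theorem sum_walsh_mul_conj (a b : ι → ZMod 2) :
    ∑ x, walsh a x * conj (walsh b x) = if a = b then (2 : ℂ) ^ Fintype.card ι else 0 := by
  simp only [conj_walsh, ← walsh_add_left, sum_walsh_apply, add_eq_zero_iff_eq_neg,
    pi_neg_eq_self_mod_two]

end Walsh

theorem four_mul_lt_two_pow_succ {k n : ℕ} (h : k < 2 ^ (n - 1)) : 4 * k < 2 ^ (n + 1) := by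
  cases n with
  | zero => simp_all
  | succ m => rw [pow_succ, pow_succ]; simp only [Nat.add_sub_cancel] at h; omega

section Bunkbed

variable {n : ℕ}

def hypercubeSymbol (z : Fin n → ZMod 2) : ℝ := if wt z = 1 then 1 else 0

theorem adjQ_eq_circulant : adjQ n = circulant fun z => (hypercubeSymbol z : ℂ) := by
  ext x y
  rw [circulant_apply, sub_eq_add_neg, pi_neg_eq_self_mod_two]
  simp [adjQ, hypercubeSymbol, apply_ite]

theorem circ_eq_circulant (f : (Fin n → ZMod 2) → ℝ) : circ f = circulant fun z => (f z : ℂ) := by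
  ext x y
  rw [circulant_apply, sub_eq_add_neg, pi_neg_eq_self_mod_two]
  rfl

theorem circulant_mulVec_walsh (g : (Fin n → ZMod 2) → ℝ) (a : Fin n → ZMod 2) :
    circulant (fun z => (g z : ℂ)) *ᵥ walsh a = (fhat g a : ℂ) • walsh a := by
  rw [circulant_mulVec_addChar, fhat]
  simp only [pi_neg_eq_self_mod_two, walsh_apply, signChar_apply]
  push_cast
  rfl

theorem Xmat_mulVec_mulShift (r : ZMod 2) :
    Xmat *ᵥ signChar.mulShift r = signChar r • ⇑(signChar.mulShift r) := by
  funext s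
  rw [mulVec, dotProduct, ZMod.sum_univ_two]
  obtain rfl | rfl := ZMod.eq_zero_or_eq_one_of_two r <;>
    obtain rfl | rfl := ZMod.eq_zero_or_eq_one_of_two s <;> norm_num [Xmat]

def bunkbedEigenvector (c : ZMod 2 × (Fin n → ZMod 2)) : ZMod 2 × (Fin n → ZMod 2) → ℂ :=
  fun p => signChar.mulShift c.1 p.1 * walsh c.2 p.2

noncomputable def bunkbedEigenvalue (f : (Fin n → ZMod 2) → ℝ) (c : ZMod 2 × (Fin n → ZMod 2)) : ℝ :=
  fhat hypercubeSymbol c.2 + (-1) ^ c.1.val * fhat f c.2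

theorem bunkbed_mulVec_eigenvector (f : (Fin n → ZMod 2) → ℝ) (c : ZMod 2 × (Fin n → ZMod 2)) :
    bunkbed f *ᵥ bunkbedEigenvector c = (bunkbedEigenvalue f c : ℂ) • bunkbedEigenvector c := by
  unfold bunkbedEigenvector
  rw [bunkbed, add_mulVec, kronecker_mulVec_mul, kronecker_mulVec_mul,
    one_mulVec, Xmat_mulVec_mulShift, adjQ_eq_circulant, circ_eq_circulant, circulant_mulVec_walsh,
    circulant_mulVec_walsh]
  funext p
  simp only [Pi.add_apply, Pi.smul_apply, smul_eq_mul, bunkbedEigenvalue, signChar_apply]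
  push_cast
  ring

theorem single_zero_eq_sum_eigenvector :
    Pi.single ((0 : ZMod 2), (0 : Fin n → ZMod 2)) (1 : ℂ)
      = ∑ c, ((2 : ℂ) ^ (n + 1))⁻¹ • bunkbedEigenvector c := by
  funext p
  rw [← Finset.smul_sum, Pi.smul_apply, Finset.sum_apply, Fintype.sum_prod_type]
  simp only [bunkbedEigenvector, AddChar.mulShift_apply, ← Finset.sum_mul_sum,
    sum_signChar_mul_left, sum_walsh_apply_left, Fintype.card_fin]
  obtain ⟨s, x⟩ := p
  by_cases hs : s = 0 <;> by_cases hx : x = 0 <;> simp [hs, hx, ← pow_succ']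

noncomputable def upperLayerCoeff (f : (Fin n → ZMod 2) → ℝ) (t : ℝ) (a : Fin n → ZMod 2) : ℂ :=
  Complex.exp (-(t : ℂ) * I * bunkbedEigenvalue f (0, a))
    - Complex.exp (-(t : ℂ) * I * bunkbedEigenvalue f (1, a))

theorem walk_bunkbed_apply_one (f : (Fin n → ZMod 2) → ℝ) (t : ℝ) (x : Fin n → ZMod 2) :
    walk (bunkbed f) (Pi.single ((0 : ZMod 2), (0 : Fin n → ZMod 2)) 1) t (1, x)
      = ∑ a, ((2 : ℂ) ^ (n + 1))⁻¹ * upperLayerCoeff f t a * walsh a x := by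
  have heig (c : ZMod 2 × (Fin n → ZMod 2)) :
      ((-(t : ℂ) * I) • bunkbed f) *ᵥ bunkbedEigenvector c
        = (-(t : ℂ) * I * bunkbedEigenvalue f c) • bunkbedEigenvector c := by
    rw [smul_mulVec, bunkbed_mulVec_eigenvector, smul_smul]
  rw [walk, single_zero_eq_sum_eigenvector, exp_mulVec_sum_smul heig, Finset.sum_apply,
    Fintype.sum_prod_type, ZMod.sum_univ_two, ← Finset.sum_add_distrib]
  refine Finset.sum_congr rfl fun a _ => ?_
  simp only [Pi.smul_apply, smul_eq_mul, bunkbedEigenvector, AddChar.mulShift_zero,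
    AddChar.mulShift_one, AddChar.one_apply, signChar_one, upperLayerCoeff, Complex.exp_eq_exp_ℂ]
  ring

theorem upperLayerCoeff_eq_zero {f : (Fin n → ZMod 2) → ℝ} {t : ℝ} {a : Fin n → ZMod 2}
    (h : fhat f a = 0) : upperLayerCoeff f t a = 0 := by
  simp [upperLayerCoeff, bunkbedEigenvalue, h]

theorem norm_upperLayerCoeff_le (f : (Fin n → ZMod 2) → ℝ) (t : ℝ) (a : Fin n → ZMod 2) :
    ‖upperLayerCoeff f t a‖ ≤ 2 := by
  have hexp (r : ZMod 2) : ‖Complex.exp (-(t : ℂ) * I * bunkbedEigenvalue f (r, a))‖ = 1 := by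
    rw [show -(t : ℂ) * I * bunkbedEigenvalue f (r, a) = ((-t * bunkbedEigenvalue f (r, a) : ℝ) : ℂ) * I
      by push_cast; ring]
    exact Complex.norm_exp_ofReal_mul_I _
  calc ‖upperLayerCoeff f t a‖ ≤ 1 + 1 := (norm_sub_le _ _).trans_eq (by rw [hexp, hexp])
    _ = 2 := by norm_num

theorem sum_norm_sq_upperLayerCoeff_le (f : (Fin n → ZMod 2) → ℝ) (t : ℝ) :
    ∑ a, ‖upperLayerCoeff f t a‖ ^ 2 ≤ 4 * (Finset.univ.filter fun a => fhat f a ≠ 0).card := by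
  have hsupp : ∀ a ∈ Finset.univ, ‖upperLayerCoeff f t a‖ ^ 2 ≠ 0 → fhat f a ≠ 0 :=
    fun a _ h hfa => h (by simp [upperLayerCoeff_eq_zero hfa])
  rw [← Finset.sum_filter_of_ne hsupp]
  calc ∑ a ∈ Finset.univ.filter (fun a => fhat f a ≠ 0), ‖upperLayerCoeff f t a‖ ^ 2
      ≤ ∑ a ∈ Finset.univ.filter (fun a => fhat f a ≠ 0), (4 : ℝ) :=
        Finset.sum_le_sum fun a _ => by
          nlinarith [norm_upperLayerCoeff_le f t a, norm_nonneg (upperLayerCoeff f t a)]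
    _ = 4 * (Finset.univ.filter fun a => fhat f a ≠ 0).card := by simp [mul_comm]

theorem sum_norm_sq_walk_bunkbed_apply_one (f : (Fin n → ZMod 2) → ℝ) (t : ℝ) :
    ∑ x, ‖walk (bunkbed f) (Pi.single ((0 : ZMod 2), (0 : Fin n → ZMod 2)) 1) t (1, x)‖ ^ 2
      = (∑ a, ‖upperLayerCoeff f t a‖ ^ 2) / 2 ^ (n + 2) := by
  simp only [walk_bunkbed_apply_one]
  rw [sum_norm_sq_sum_mul_of_orthogonal (N := 2 ^ n) (u := fun a => ⇑(walsh a)) fun a b => by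
    rw [sum_walsh_mul_conj, Fintype.card_fin]; push_cast; rfl]
  simp only [norm_mul, norm_inv, norm_pow, Complex.norm_ofNat, mul_pow, ← Finset.mul_sum]
  field_simp
  ring

theorem sum_norm_sq_walk_bunkbed_apply_one_lt {f : (Fin n → ZMod 2) → ℝ} (t : ℝ)
    (hsupp : (Finset.univ.filter fun a => fhat f a ≠ 0).card < 2 ^ (n - 1)) :
    ∑ x, ‖walk (bunkbed f) (Pi.single ((0 : ZMod 2), (0 : Fin n → ZMod 2)) 1) t (1, x)‖ ^ 2
      < 1 / 2 := by
  have hcard : 4 * ((Finset.univ.filter fun a => fhat f a ≠ 0).card : ℝ) < 2 ^ (n + 1) := by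
    exact_mod_cast four_mul_lt_two_pow_succ hsupp
  rw [sum_norm_sq_walk_bunkbed_apply_one, div_lt_iff₀ (by positivity)]
  calc ∑ a, ‖upperLayerCoeff f t a‖ ^ 2
      ≤ 4 * (Finset.univ.filter fun a => fhat f a ≠ 0).card := sum_norm_sq_upperLayerCoeff_le f t
    _ < 2 ^ (n + 1) := hcard
    _ = 1 / 2 * 2 ^ (n + 2) := by ring

end Bunkbed

theorem bunkbed_small_fourier_support_not_uniform_mixing_general (n : ℕ)
    (f : (Fin n → ZMod 2) → ℝ)
    (hsupp : (Finset.univ.filter fun a => fhat f a ≠ 0).card < 2 ^ (n - 1)) :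
    ∀ t : ℝ, ∃ v : ZMod 2 × (Fin n → ZMod 2),
      ‖walk (bunkbed f)
        (Pi.single ((0 : ZMod 2), (0 : Fin n → ZMod 2)) 1) t v‖ ^ 2
        ≠ 1 / 2 ^ (n + 1) := by
  intro t
  by_contra! huniform
  have hmass : ∑ x : Fin n → ZMod 2,
      ‖walk (bunkbed f) (Pi.single ((0 : ZMod 2), (0 : Fin n → ZMod 2)) 1) t (1, x)‖ ^ 2
        = 1 / 2 := by
    simp only [huniform, Finset.sum_const, Finset.card_univ, Fintype.card_pi, ZMod.card,
      Finset.prod_const, Fintype.card_fin, nsmul_eq_mul, Nat.cast_pow, Nat.cast_ofNat]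
    field_simp
    ring
  exact (sum_norm_sq_walk_bunkbed_apply_one_lt t hsupp).ne hmass

/-- If the Fourier transform of the Boolean function `f` has support of size
less than `2^(n-1)`, then the quantum walk on the bunkbed `𝓑_n(A_f)` starting
at `(0, 0_n)` is never instantaneous uniform mixing. -/
theorem bunkbed_small_fourier_support_not_uniform_mixing (n : ℕ) (hn : 1 ≤ n)
    (f : (Fin n → ZMod 2) → ℝ) (hBool : ∀ x, f x = 0 ∨ f x = 1)
    (hsupp : (Finset.univ.filter fun a => fhat f a ≠ 0).card < 2 ^ (n - 1)) :
    ∀ t : ℝ, ∃ v : ZMod 2 × (Fin n → ZMod 2),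
      ‖walk (bunkbed f)
        (Pi.single ((0 : ZMod 2), (0 : Fin n → ZMod 2)) 1) t v‖ ^ 2
        ≠ 1 / 2 ^ (n + 1) :=
  bunkbed_small_fourier_support_not_uniform_mixing_general n f hsupp
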